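/- Let (P, C, ψ) be an entwining structure such that P is an entwined module via its multiplication and a coaction ρ with ρ(1) = 1 ⊗ e for group-like e ∈ C. Set B = P^{co C}_e. Let π: C → D be a coalgebra map, ē = π(e), and A = {a ∈ P | (id ⊗ π)∘ρ(a) = a ⊗ ē}. If P is a C-equivariantly projective left B-module (i.e. the multiplication B ⊗ P → P has a left B-linear, right C-colinear splitting σ), then A is a projective left B-module. -/

import Mathlib

open TensorProduct

variable (k C D P : Type) [Field k] [AddCommGroup C] [Module k C] [Coalgebra k C]
  [AddCommGroup D] [Module k D] [Coalgebra k D]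
  [Ring P] [Algebra k P]

/-- The `ē`-coinvariants `A ⊆ P` of the pushed-forward `D`-coaction `(id ⊗ π)∘ρ`. -/
noncomputable def Asub (ρ : P →ₗ[k] P ⊗[k] C) (π : C →ₗ[k] D) (eb : D) :
    Submodule k P :=
  LinearMap.ker ((LinearMap.lTensor P π ∘ₗ ρ) - (TensorProduct.mk k P D).flip eb)

/-- The `e`-coinvariants `B = P^{co C}_e`. -/
def Bset (ρ : P →ₗ[k] P ⊗[k] C) (e : C) : Set P := {b : P | ρ b = b ⊗ₜ[k] e}

/-!
Restricting the splitting `σ : P → B ⊗ P` to `A` gives the required splitting. Right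
`C`-colinearity of `σ` survives pushing the coaction forward along `π`, so for `a ∈ A`
the element `σ a` is killed by `P ⊗ φ`, where `φ = (id ⊗ π) ∘ ρ - (· ⊗ ē)` has kernel `A`.
Since `σ a` also lies in `span B ⊗ P` and everything is flat over the field `k`, exactness
of `span B ⊗ A → span B ⊗ P → span B ⊗ (P ⊗ D)` puts `σ a` in `span B ⊗ A`.
-/

namespace TensorProduct

variable {R M N C D Q : Type*} [CommRing R] [AddCommGroup M] [Module R M]
  [AddCommGroup N] [Module R N] [AddCommGroup C] [Module R C] [AddCommGroup D] [Module R D]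
  [AddCommGroup Q] [Module R Q]

theorem mem_map₂_mk_ker_of_lTensor_eq_zero (U : Submodule R M) [Module.Flat R U]
    [Module.Flat R Q] (φ : N →ₗ[R] Q) {x : M ⊗[R] N}
    (hx : x ∈ Submodule.map₂ (mk R M N) U ⊤) (hφx : LinearMap.lTensor M φ x = 0) :
    x ∈ Submodule.map₂ (mk R M N) U (LinearMap.ker φ) := by
  rw [← LinearMap.range_id, ← U.range_subtype, ← range_map] at hx
  obtain ⟨y, rfl⟩ := hx
  have hy : LinearMap.lTensor U φ y = 0 := by
    apply Module.Flat.rTensor_preserves_injective_linearMap (M := Q) _ U.injective_subtype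
    rw [map_zero, ← LinearMap.comp_apply, LinearMap.rTensor_comp_lTensor, ← hφx,
      ← LinearMap.comp_apply, LinearMap.lTensor_comp_map, LinearMap.comp_id]
  obtain ⟨z, rfl⟩ := (Module.Flat.lTensor_exact U (LinearMap.exact_subtype_ker_map φ) y).mp hy
  rw [← range_mapIncl]
  exact ⟨z, by rw [LinearMap.map_lTensor, LinearMap.id_comp]⟩

theorem span_tmul_eq_map₂_span (s : Set M) (t : Set N) :
    Submodule.span R {w : M ⊗[R] N | ∃ m ∈ s, ∃ n ∈ t, w = m ⊗ₜ[R] n} =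
      Submodule.map₂ (mk R M N) (Submodule.span R s) (Submodule.span R t) := by
  rw [Submodule.map₂_span_span]
  congr 1
  ext w
  simp [eq_comm]

theorem lTensor_lTensor_comp_apply_of_colinear (σ : N →ₗ[R] M ⊗[R] N)
    (ρ : N →ₗ[R] N ⊗[R] C)
    (hσ : ∀ n, LinearMap.rTensor C σ (ρ n) =
      (TensorProduct.assoc R M N C).symm (LinearMap.lTensor M ρ (σ n)))
    (π : C →ₗ[R] D) (n : N) :
    LinearMap.lTensor M (LinearMap.lTensor N π ∘ₗ ρ) (σ n) =
      TensorProduct.assoc R M N D (LinearMap.rTensor D σ (LinearMap.lTensor N π (ρ n))) := by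
  rw [LinearMap.lTensor_comp, LinearMap.comp_apply,
    ← (TensorProduct.assoc R M N C).apply_symm_apply (LinearMap.lTensor M ρ (σ n)), ← hσ,
    ← LinearMap.comp_apply (LinearMap.rTensor D σ), LinearMap.rTensor_comp_lTensor,
    ← LinearMap.lTensor_comp_rTensor, LinearMap.comp_apply, LinearMap.lTensor_tensor]
  simp only [LinearMap.coe_comp, LinearEquiv.coe_coe, Function.comp_apply,
    LinearEquiv.apply_symm_apply]

theorem assoc_tmul_eq_lTensor_flip_mk (x : M ⊗[R] N) (d : D) :
    TensorProduct.assoc R M N D (x ⊗ₜ[R] d) = LinearMap.lTensor M ((mk R N D).flip d) x := by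
  induction x using TensorProduct.induction_on with
  | zero => simp
  | tmul m n => simp
  | add x y hx hy => rw [add_tmul, map_add, map_add, hx, hy]

end TensorProduct

theorem stmt6
    (ρ : P →ₗ[k] P ⊗[k] C)
    (e : C)
    (π : C →ₗ[k] D)
    -- `P` is a `C`-equivariantly projective left `B`-module: there is a left `B`-linear,
    -- right `C`-colinear splitting `σ : P → B ⊗ P` of the multiplication map
    (hproj : ∃ σ : P →ₗ[k] P ⊗[k] P,
      (∀ p : P, LinearMap.mul' k P (σ p) = p) ∧
      (∀ p : P, σ p ∈
        Submodule.span k {w : P ⊗[k] P | ∃ b ∈ Bset k C P ρ e, ∃ q : P, w = b ⊗ₜ[k] q}) ∧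
      (∀ b ∈ Bset k C P ρ e, ∀ p : P,
        σ (b * p) = LinearMap.rTensor P (LinearMap.mulLeft k b) (σ p)) ∧
      (∀ p : P,
        LinearMap.rTensor C σ (ρ p) =
          (TensorProduct.assoc k P P C).symm (LinearMap.lTensor P ρ (σ p)))) :
    -- conclusion: `A` is a projective left `B`-module
    ∃ τ : P →ₗ[k] P ⊗[k] P,
      (∀ a ∈ Asub k C D P ρ π (π e), LinearMap.mul' k P (τ a) = a) ∧
      (∀ a ∈ Asub k C D P ρ π (π e), τ a ∈
        Submodule.span k {w : P ⊗[k] P | ∃ b ∈ Bset k C P ρ e,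
          ∃ a' ∈ Asub k C D P ρ π (π e), w = b ⊗ₜ[k] a'}) ∧
      (∀ b ∈ Bset k C P ρ e, ∀ a ∈ Asub k C D P ρ π (π e),
        τ (b * a) = LinearMap.rTensor P (LinearMap.mulLeft k b) (τ a)) := by
  obtain ⟨σ, hσmul, hσspan, hσB, hσcol⟩ := hproj
  refine ⟨σ, fun a _ => hσmul a, fun a ha => ?_, fun b hb a _ => hσB b hb a⟩
  set φ := LinearMap.lTensor P π ∘ₗ ρ - (TensorProduct.mk k P D).flip (π e)
  have hφσa : LinearMap.lTensor P φ (σ a) = 0 := by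
    have hρa : LinearMap.lTensor P π (ρ a) = a ⊗ₜ[k] π e := sub_eq_zero.mp ha
    rw [LinearMap.lTensor_sub, LinearMap.sub_apply, sub_eq_zero,
      TensorProduct.lTensor_lTensor_comp_apply_of_colinear σ ρ hσcol, hρa,
      LinearMap.rTensor_tmul, TensorProduct.assoc_tmul_eq_lTensor_flip_mk]
  have hσa : σ a ∈ Submodule.map₂ (TensorProduct.mk k P P)
      (Submodule.span k (Bset k C P ρ e)) ⊤ := by
    refine Submodule.span_le.mpr ?_ (hσspan a)
    rintro _ ⟨b, hb, q, rfl⟩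
    exact Submodule.apply_mem_map₂ _ (Submodule.subset_span hb) Submodule.mem_top
  have hσa_ker := TensorProduct.mem_map₂_mk_ker_of_lTensor_eq_zero _ φ hσa hφσa
  rwa [← Submodule.span_eq (LinearMap.ker φ), ← TensorProduct.span_tmul_eq_map₂_span] at hσa_ker
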